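/- Let $P$ be a polynomial in $m+1$ variables over $\mathbb{C}$, let $f_0,\dots,f_m \in \mathbb{C}[t]$ be one-variable polynomials, let $t_0 \in \mathbb{C}$, and set $a = (f_0(t_0),\dots,f_m(t_0)) \in \mathbb{C}^{m+1}$. If $P$ vanishes with multiplicity at least $\mu$ at the point $a$, then $(t - t_0)^{\mu}$ divides the one-variable polynomial $P(f_0(t),\dots,f_m(t))$. -/

import Mathlib

/-- A polynomial `P ∈ ℂ[x_0, …, x_m]` vanishes with multiplicity at least `y` at a
point `p ∈ ℂ^(m+1)` if every iterated partial derivative of `P` of total order at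
most `y - 1` (equivalently, of total order `< y`) evaluates to `0` at `p`. -/
def VanishesToOrder {σ : Type*} (Q : MvPolynomial σ ℂ) (p : σ → ℂ) (y : ℕ) : Prop :=
  ∀ L : List σ, L.length < y →
    MvPolynomial.eval p (L.foldr (fun i q => MvPolynomial.pderiv i q) Q) = 0

open Polynomial

/-!
Along the curve `t ↦ f(t)`, the chain rule expresses the derivative of `P(f(t))` through the
composites `(∂ᵢP)(f(t))`, and each `∂ᵢP` vanishes to order `μ - 1` at `f(t₀)`.  By induction the
derivative is divisible by `(t - t₀)^(μ - 1)`; since `t₀` is also a root of `P(f(t))` itself, in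
characteristic zero this raises the multiplicity to `μ`.
-/

namespace Polynomial

variable {R : Type*} [CommRing R] [IsDomain R] [CharZero R]

theorem pow_succ_dvd_of_isRoot_of_pow_dvd_derivative {g : R[X]} {t : R} {n : ℕ}
    (hroot : g.IsRoot t) (hder : (X - C t) ^ n ∣ derivative g) :
    (X - C t) ^ (n + 1) ∣ g := by
  rcases eq_or_ne g 0 with rfl | hg
  · exact dvd_zero _
  have hg' : derivative g ≠ 0 := by
    intro h
    rw [eq_C_of_derivative_eq_zero h] at hroot hg
    exact hg (by rw [show g.coeff 0 = 0 by simpa using hroot, C_0])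
  have hmult := derivative_rootMultiplicity_of_root hroot
  have hpos := (rootMultiplicity_pos hg).mpr hroot
  have hle := (le_rootMultiplicity_iff hg').mpr hder
  exact (le_rootMultiplicity_iff hg).mp (by omega)

end Polynomial

namespace MvPolynomial

variable {R σ : Type*} [CommSemiring R]

theorem eval_aeval_polynomial (f : σ → R[X]) (t : R) (P : MvPolynomial σ R) :
    (aeval f P).eval t = eval (fun i => (f i).eval t) P := by
  induction P using MvPolynomial.induction_on with
  | C c => simp
  | add p q hp hq => simp [hp, hq]
  | mul_X p i hp => simp [hp]

theorem derivative_aeval [Fintype σ] (f : σ → R[X]) (P : MvPolynomial σ R) :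
    derivative (aeval f P) = ∑ i, aeval f (pderiv i P) * derivative (f i) := by
  induction P using MvPolynomial.induction_on with
  | C c => simp
  | add p q hp hq => simp [hp, hq, Finset.sum_add_distrib, add_mul]
  | mul_X p i hp =>
    simp only [map_mul, aeval_X, derivative_mul, hp, pderiv_mul, map_add, add_mul,
      Finset.sum_add_distrib, Finset.sum_mul]
    refine congrArg₂ (· + ·) ?_ ?_
    · exact Finset.sum_congr rfl fun j _ => by ring
    · rw [Finset.sum_eq_single i] <;> simp +contextual [eq_comm]

end MvPolynomial

namespace VanishesToOrder

open MvPolynomial (eval aeval)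

variable {σ : Type*} {Q : MvPolynomial σ ℂ} {p : σ → ℂ} {y : ℕ}

theorem eval_eq_zero (h : VanishesToOrder Q p (y + 1)) : eval p Q = 0 :=
  h [] y.succ_pos

theorem pderiv (h : VanishesToOrder Q p (y + 1)) (i : σ) :
    VanishesToOrder (MvPolynomial.pderiv i Q) p y := fun L hL => by
  simpa [List.foldr_append] using h (L ++ [i]) (by simpa using hL)

theorem pow_dvd_aeval [Fintype σ] {f : σ → ℂ[X]} {t : ℂ}
    (h : VanishesToOrder Q (fun i => (f i).eval t) y) : (X - C t) ^ y ∣ aeval f Q := by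
  induction y generalizing Q with
  | zero => simp
  | succ y ih =>
    refine pow_succ_dvd_of_isRoot_of_pow_dvd_derivative ?_ ?_
    · rw [IsRoot, MvPolynomial.eval_aeval_polynomial, h.eval_eq_zero]
    · rw [MvPolynomial.derivative_aeval]
      exact Finset.dvd_sum fun i _ => (ih (h.pderiv i)).mul_right _

end VanishesToOrder

/-- Let `P` be a polynomial in `m + 1` variables over `ℂ`, let `f_0, …, f_m ∈ ℂ[t]`,
let `t_0 ∈ ℂ`, and set `a = (f_0(t_0), …, f_m(t_0))`.  If `P` vanishes with
multiplicity at least `μ` at `a`, then `(t - t_0)^μ` divides the one-variable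
polynomial `P(f_0(t), …, f_m(t))`. -/
theorem stmt9 (m : ℕ) (P : MvPolynomial (Fin (m + 1)) ℂ)
    (f : Fin (m + 1) → Polynomial ℂ) (t0 : ℂ) (μ : ℕ)
    (hv : VanishesToOrder P (fun i => (f i).eval t0) μ) :
    (Polynomial.X - Polynomial.C t0) ^ μ ∣ MvPolynomial.aeval f P :=
  hv.pow_dvd_aeval
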